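/- Identify ℝ⁴ with ℝ² × ℝ² with coordinates (x₁, y₁, x₂, y₂), equipped with the standard symplectic form ω₀(u, v) = u₁v₂ − u₂v₁ + u₃v₄ − u₄v₃, and let W₁ = ℝ² × {0} and W₂ = {0} × ℝ². For a differentiable function F : ℝ⁴ → ℝ, let X_F : ℝ⁴ → ℝ⁴ denote its Hamiltonian vector field, defined pointwise as the unique vector with ω₀(X_F(p), v) = DF_p(v) for all v ∈ ℝ⁴ (explicitly, X_F = (∂F/∂y₁, −∂F/∂x₁, ∂F/∂y₂, −∂F/∂x₂)). Let H : ℝ⁴ → ℝ be differentiable with X_H tangent to the coordinate planes, i.e., X_H(p) ∈ W₁ for every p ∈ W₁ and X_H(p) ∈ W₂ for every p ∈ W₂. Let f : ℝ × ℝ → ℝ be differentiable and define g : ℝ⁴ → ℝ by g(x₁, y₁, x₂, y₂) = f(x₁² + y₁², x₂² + y₂²). Then the Hamiltonian vector field of the product g·H is also tangent to the coordinate planes: X_{g·H}(p) ∈ W₁ for every p ∈ W₁ and X_{g·H}(p) ∈ W₂ for every p ∈ W₂. -/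

import Mathlib

/-- The standard symplectic form on `ℝ⁴` with coordinates `(x₁, y₁, x₂, y₂)`. -/
def omega0 (u v : Fin 4 → ℝ) : ℝ :=
  u 0 * v 1 - u 1 * v 0 + u 2 * v 3 - u 3 * v 2

/-- The coordinate plane `W₁ = ℝ² × {0}`. -/
def W1 : Set (Fin 4 → ℝ) := {u | u 2 = 0 ∧ u 3 = 0}

/-- The coordinate plane `W₂ = {0} × ℝ²`. -/
def W2 : Set (Fin 4 → ℝ) := {u | u 0 = 0 ∧ u 1 = 0}

/-- The Hamiltonian vector field of `F : ℝ⁴ → ℝ` with respect to `ω₀`: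
`X_F = (∂F/∂y₁, −∂F/∂x₁, ∂F/∂y₂, −∂F/∂x₂)`; equivalently the unique vector field
with `ω₀ (X_F p) v = DF_p v` for all `v`. -/
noncomputable def hamVF (F : (Fin 4 → ℝ) → ℝ) (p : Fin 4 → ℝ) : Fin 4 → ℝ :=
  ![fderiv ℝ F p (Pi.single 1 1), -(fderiv ℝ F p (Pi.single 0 1)),
    fderiv ℝ F p (Pi.single 3 1), -(fderiv ℝ F p (Pi.single 2 1))]

/-!
The cut-off `g` is invariant under each coordinate reflection `qᵢ ↦ -qᵢ`. At a point with
`pᵢ = 0` that reflection fixes `p` and negates `eᵢ`, so `dg_p(eᵢ) = -dg_p(eᵢ) = 0`, and the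
product rule gives `d(gH)_p(eᵢ) = g(p) dH_p(eᵢ)`. Tangency of `X_F` to `W₁` (resp. `W₂`) says
exactly that the derivatives of `F` along the two coordinate directions normal to that plane
vanish on it.
-/

section Reflection

variable {ι : Type*} [DecidableEq ι]

noncomputable def coordReflection (i : ι) : (ι → ℝ) →L[ℝ] ι → ℝ :=
  ContinuousLinearMap.pi fun j =>
    if j = i then -ContinuousLinearMap.proj j else ContinuousLinearMap.proj j

theorem coordReflection_apply (i j : ι) (v : ι → ℝ) :
    coordReflection i v j = if j = i then -v j else v j := by
  unfold coordReflection
  split_ifs <;> simp [*]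

theorem coordReflection_apply_sq (i j : ι) (v : ι → ℝ) :
    coordReflection i v j ^ 2 = v j ^ 2 := by
  rw [coordReflection_apply]
  split_ifs <;> simp

theorem coordReflection_of_apply_eq_zero {i : ι} {p : ι → ℝ} (hp : p i = 0) :
    coordReflection i p = p := by
  ext j
  rw [coordReflection_apply]
  split_ifs with h <;> simp [h, hp]

theorem coordReflection_single (i : ι) :
    coordReflection i (Pi.single i 1) = -Pi.single i 1 := by
  ext j
  rw [coordReflection_apply]
  split_ifs with h <;> simp [h]

end Reflection

theorem fderiv_apply_eq_zero_of_comp_eq_self {E F : Type*} [NormedAddCommGroup E]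
    [NormedSpace ℝ E] [NormedAddCommGroup F] [NormedSpace ℝ F] {g : E → F} {p v : E}
    (L : E →L[ℝ] E) (hg : DifferentiableAt ℝ g p) (hgL : g ∘ L = g) (hp : L p = p)
    (hv : L v = -v) : fderiv ℝ g p v = 0 := by
  have hgLp : DifferentiableAt ℝ g (L p) := hp.symm ▸ hg
  have hchain : fderiv ℝ g p = (fderiv ℝ g p).comp L := by
    conv_lhs => rw [← hgL, fderiv_comp p hgLp L.differentiableAt, hp, L.fderiv]
  have hneg : fderiv ℝ g p v = -fderiv ℝ g p v := by
    conv_lhs => rw [hchain, ContinuousLinearMap.comp_apply, hv, map_neg]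
  have htwo : (2 : ℝ) • fderiv ℝ g p v = 0 := by
    rw [two_smul]
    nth_rewrite 2 [hneg]
    exact add_neg_cancel _
  exact (smul_eq_zero.mp htwo).resolve_left two_ne_zero

theorem fderiv_mul_apply_eq_zero {E : Type*} [NormedAddCommGroup E] [NormedSpace ℝ E]
    {g H : E → ℝ} {p v : E} (hg : DifferentiableAt ℝ g p) (hH : DifferentiableAt ℝ H p)
    (hgv : fderiv ℝ g p v = 0) (hHv : fderiv ℝ H p v = 0) :
    fderiv ℝ (fun q => g q * H q) p v = 0 := by
  rw [fderiv_fun_mul hg hH]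
  simp [hgv, hHv]

theorem hamVF_mem_W1_iff (F : (Fin 4 → ℝ) → ℝ) (p : Fin 4 → ℝ) :
    hamVF F p ∈ W1 ↔
      fderiv ℝ F p (Pi.single 3 1) = 0 ∧ fderiv ℝ F p (Pi.single 2 1) = 0 := by
  simp [hamVF, W1]

theorem hamVF_mem_W2_iff (F : (Fin 4 → ℝ) → ℝ) (p : Fin 4 → ℝ) :
    hamVF F p ∈ W2 ↔
      fderiv ℝ F p (Pi.single 1 1) = 0 ∧ fderiv ℝ F p (Pi.single 0 1) = 0 := by
  simp [hamVF, W2]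

theorem fderiv_mul_single_eq_zero_of_reflection_invariant {ι : Type*} [Fintype ι]
    [DecidableEq ι] {g H : (ι → ℝ) → ℝ} {p : ι → ℝ} {i : ι} (hg : DifferentiableAt ℝ g p)
    (hgi : g ∘ coordReflection i = g) (hH : DifferentiableAt ℝ H p) (hp : p i = 0)
    (hHi : fderiv ℝ H p (Pi.single i 1) = 0) :
    fderiv ℝ (fun q => g q * H q) p (Pi.single i 1) = 0 :=
  fderiv_mul_apply_eq_zero hg hH
    (fderiv_apply_eq_zero_of_comp_eq_self _ hg hgi
      (coordReflection_of_apply_eq_zero hp) (coordReflection_single i))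
    hHi

/-- If `X_H` is tangent to the coordinate planes `W₁`, `W₂`, and
`g (x₁, y₁, x₂, y₂) = f (x₁² + y₁², x₂² + y₂²)` for a differentiable `f`, then the
Hamiltonian vector field of `g·H` is also tangent to the coordinate planes. -/
theorem hamVF_smul_cutoff_tangent
    (H : (Fin 4 → ℝ) → ℝ) (hH : Differentiable ℝ H)
    (hW1 : ∀ p ∈ W1, hamVF H p ∈ W1) (hW2 : ∀ p ∈ W2, hamVF H p ∈ W2)
    (f : ℝ × ℝ → ℝ) (hf : Differentiable ℝ f) :
    (∀ p ∈ W1,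
        hamVF (fun q : Fin 4 → ℝ =>
          f (q 0 ^ 2 + q 1 ^ 2, q 2 ^ 2 + q 3 ^ 2) * H q) p ∈ W1) ∧
    (∀ p ∈ W2,
        hamVF (fun q : Fin 4 → ℝ =>
          f (q 0 ^ 2 + q 1 ^ 2, q 2 ^ 2 + q 3 ^ 2) * H q) p ∈ W2) := by
  set g : (Fin 4 → ℝ) → ℝ := fun q => f (q 0 ^ 2 + q 1 ^ 2, q 2 ^ 2 + q 3 ^ 2)
  have hg : Differentiable ℝ g := hf.comp (by fun_prop)
  have hgi (i : Fin 4) : g ∘ coordReflection i = g := by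
    funext q
    simp only [g, Function.comp_apply, coordReflection_apply_sq]
  have key {p : Fin 4 → ℝ} {i : Fin 4} (hp : p i = 0)
      (hHi : fderiv ℝ H p (Pi.single i 1) = 0) :
      fderiv ℝ (fun q => g q * H q) p (Pi.single i 1) = 0 :=
    fderiv_mul_single_eq_zero_of_reflection_invariant (hg p) (hgi i) (hH p) hp hHi
  constructor
  · intro p hp
    obtain ⟨hH3, hH2⟩ := (hamVF_mem_W1_iff H p).mp (hW1 p hp)
    exact (hamVF_mem_W1_iff _ p).mpr ⟨key hp.2 hH3, key hp.1 hH2⟩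
  · intro p hp
    obtain ⟨hH1, hH0⟩ := (hamVF_mem_W2_iff H p).mp (hW2 p hp)
    exact (hamVF_mem_W2_iff _ p).mpr ⟨key hp.2 hH1, key hp.1 hH0⟩
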